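/- arXiv:2005.03237 — 3 statements merged into one kernel-verified Lean document; each statement's English description precedes it below -/
import Mathlib

section
/- Let E_{mf} be the interpolation matrix from face nodes to mortar nodes and define E_{fm} = M_f⁻¹ E_{mf}ᵀ M_m with M_f, M_m diagonal positive quadrature-weight matrices. If the face quadrature is exact for products of polynomials of total degree N + min(N,N_f,N_m) and the mortar quadrature is exact for degree N + min(N,N_f,N_m), then for any polynomial u of degree at most min(N,N_f,N_m), E_{fm} E_{mf} u_f = u_f, where u_f is the vector of values of u at the face nodes. -/
open Matrix Polynomial

lemma lagrange_interp_eval {N : ℕ} (xf : Fin (N + 1) → ℝ) (hxf : Function.Injective xf)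
    (u : Polynomial ℝ) (hu : u.natDegree ≤ N) (x : ℝ) :
    ∑ j : Fin (N + 1), u.eval (xf j) * (Lagrange.basis Finset.univ xf j).eval x
      = u.eval x := by
  have hvs : Set.InjOn xf (Finset.univ : Finset (Fin (N + 1))) := hxf.injOn
  have hdeg : u.degree < (Finset.univ : Finset (Fin (N + 1))).card := by
    rw [Finset.card_univ, Fintype.card_fin]
    exact lt_of_le_of_lt degree_le_natDegree (by exact_mod_cast Nat.lt_succ_of_le hu)
  conv_rhs => rw [Lagrange.eq_interpolate hvs hdeg, Lagrange.interpolate_apply]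
  simp [eval_finset_sum]

/-- Let `E_{mf}` interpolate from face nodes to mortar nodes and
`E_{fm} = M_f⁻¹ E_{mf}ᵀ M_m` with `M_f, M_m` diagonal positive quadrature-weight matrices.
If the face quadrature is exact for polynomials of degree `N + N_f` and the mortar
quadrature for degree `N + N_m`, then for any polynomial `u` of degree at most
`min(N, N_f, N_m)`, `E_{fm} E_{mf} u_f = u_f` where `u_f` is the vector of face-node
values of `u`. -/
theorem mortar_projection_exactness
    (N Nf Nm M : ℕ)
    (xf : Fin (N + 1) → ℝ) (hxf : Function.Injective xf)
    (wf : Fin (N + 1) → ℝ) (hwf : ∀ i, 0 < wf i)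
    (xm : Fin M → ℝ) (wm : Fin M → ℝ) (hwm : ∀ i, 0 < wm i)
    (hface : ∀ p : Polynomial ℝ, p.natDegree ≤ N + Nf →
      ∑ i, wf i * p.eval (xf i) = ∫ x in (-1 : ℝ)..1, p.eval x)
    (hmortar : ∀ p : Polynomial ℝ, p.natDegree ≤ N + Nm →
      ∑ i, wm i * p.eval (xm i) = ∫ x in (-1 : ℝ)..1, p.eval x)
    (Emf : Matrix (Fin M) (Fin (N + 1)) ℝ)
    (hEmf : Emf = Matrix.of fun i j =>
      (Lagrange.basis Finset.univ xf j).eval (xm i)) :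
    ∀ u : Polynomial ℝ, u.natDegree ≤ min N (min Nf Nm) →
      ((Matrix.diagonal (fun i => (wf i)⁻¹) * Emfᵀ * Matrix.diagonal wm) * Emf).mulVec
          (fun i => u.eval (xf i)) = fun i => u.eval (xf i) := by
  intro u hu
  have hvs : Set.InjOn xf (Finset.univ : Finset (Fin (N + 1))) := hxf.injOn
  have huN : u.natDegree ≤ N := hu.trans (min_le_left _ _)
  have huNf : u.natDegree ≤ Nf := hu.trans ((min_le_right _ _).trans (min_le_left _ _))
  have huNm : u.natDegree ≤ Nm := hu.trans ((min_le_right _ _).trans (min_le_right _ _))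
  have hbasisdeg : ∀ i : Fin (N + 1), (Lagrange.basis Finset.univ xf i).natDegree = N := by
    intro i
    rw [Lagrange.natDegree_basis hvs (Finset.mem_univ i), Finset.card_univ, Fintype.card_fin]
    exact Nat.succ_sub_one N
  -- step 1: Emf applied to face values gives mortar values
  have h1 : Emf.mulVec (fun i => u.eval (xf i)) = fun k => u.eval (xm k) := by
    funext k
    simp only [hEmf, Matrix.mulVec, dotProduct, Matrix.of_apply]
    rw [← lagrange_interp_eval xf hxf u huN (xm k)]
    exact Finset.sum_congr rfl (fun j _ => mul_comm _ _)
  have key : ∀ i, ∑ k, wm k * ((Lagrange.basis Finset.univ xf i).eval (xm k) * u.eval (xm k))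
      = wf i * u.eval (xf i) := by
    intro i
    have hmul : (Lagrange.basis Finset.univ xf i * u).natDegree ≤ N + u.natDegree := by
      calc _ ≤ (Lagrange.basis Finset.univ xf i).natDegree + u.natDegree := natDegree_mul_le
      _ = N + u.natDegree := by rw [hbasisdeg i]
    have hm := hmortar (Lagrange.basis Finset.univ xf i * u)
      (hmul.trans (Nat.add_le_add_left huNm N))
    have hf := hface (Lagrange.basis Finset.univ xf i * u)
      (hmul.trans (Nat.add_le_add_left huNf N))
    simp only [eval_mul] at hm hf
    rw [hm, ← hf]
    rw [Finset.sum_eq_single i]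
    · rw [Lagrange.eval_basis_self hvs (Finset.mem_univ i)]; ring
    · intro j _ hj
      rw [Lagrange.eval_basis_of_ne hj.symm (Finset.mem_univ j)]; ring
    · simp
  have h2 : Matrix.diagonal wm *ᵥ (fun k => u.eval (xm k)) = fun k => wm k * u.eval (xm k) := by
    funext k; simp [Matrix.mulVec_diagonal]
  have h3 : Emfᵀ *ᵥ (fun k => wm k * u.eval (xm k)) = fun j => wf j * u.eval (xf j) := by
    funext j
    simp only [hEmf, Matrix.mulVec, dotProduct, Matrix.transpose_apply, Matrix.of_apply]
    rw [← key j]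
    exact Finset.sum_congr rfl (fun k _ => by ring)
  rw [Matrix.mul_assoc, Matrix.mul_assoc, ← Matrix.mulVec_mulVec, ← Matrix.mulVec_mulVec,
    ← Matrix.mulVec_mulVec, h1, h2, h3]
  funext i
  simp [Matrix.mulVec_diagonal, inv_mul_cancel_left₀ (hwf i).ne']
end

section
/- If Q_m is a block matrix satisfying Q_m 𝟙 = 0 and Q_m + Q_mᵀ = diag(0, 0, B_m), and each hatted operator Q̂_j satisfies these properties, then the curved operator Q_{i,m} = (1/2) Σ_j (diag(g_{ij}) Q̂_{j,m} + Q̂_{j,m} diag(g_{ij})) satisfies the SBP property Q_{i,m} + Q_{i,m}ᵀ = diag(0, 0, B_{i,m}), where B_{i,m} = (1/2) Σ_j (B̂_{j,m} diag(g_{ij})|_m + diag(g_{ij})|_m B̂_{j,m}), i.e. the diagonal matrix of physically scaled normals defined via Nanson's formula n_i J_f = Σ_j g_{ij} n̂_j. -/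
open Matrix

/-- If each reference operator `Q̂_{j,m}` satisfies the block SBP property
`Q̂_{j,m} + Q̂_{j,m}ᵀ = diag(0, 0, B̂_{j,m})` with `B̂_{j,m}` diagonal, then the curved
operator `Q_{i,m} = (1/2) Σ_j (diag(g_{ij}) Q̂_{j,m} + Q̂_{j,m} diag(g_{ij}))` satisfies
`Q_{i,m} + Q_{i,m}ᵀ = diag(0, 0, B_{i,m})`, where `B_{i,m}` is the diagonal matrix of
physically scaled normals given by Nanson's formula `n_i J_f = Σ_j g_{ij} n̂_j`. -/
theorem curved_mortar_sbp_property
    {vol fac mor : Type*} [Fintype vol] [Fintype fac] [Fintype mor]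
    [DecidableEq vol] [DecidableEq fac] [DecidableEq mor]
    (d : ℕ)
    (Qhat : Fin d → Matrix ((vol ⊕ fac) ⊕ mor) ((vol ⊕ fac) ⊕ mor) ℝ)
    (bhat : Fin d → mor → ℝ)
    (g : Fin d → ((vol ⊕ fac) ⊕ mor) → ℝ)
    (hSBP : ∀ j, Qhat j + (Qhat j)ᵀ =
      Matrix.fromBlocks 0 0 0 (Matrix.diagonal (bhat j))) :
    ((1 / 2 : ℝ) • ∑ j, (Matrix.diagonal (g j) * Qhat j + Qhat j * Matrix.diagonal (g j))) +
      ((1 / 2 : ℝ) • ∑ j, (Matrix.diagonal (g j) * Qhat j + Qhat j * Matrix.diagonal (g j)))ᵀ =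
      Matrix.fromBlocks 0 0 0
        (Matrix.diagonal fun k => ∑ j, bhat j k * g j (Sum.inr k)) := by

  have key : ∀ j, (Matrix.diagonal (g j) * Qhat j + Qhat j * Matrix.diagonal (g j))
      + (Matrix.diagonal (g j) * Qhat j + Qhat j * Matrix.diagonal (g j))ᵀ
      = Matrix.fromBlocks 0 0 0
          (Matrix.diagonal fun k => g j (Sum.inr k) * bhat j k
            + bhat j k * g j (Sum.inr k)) := by
    intro j
    have hd : Matrix.diagonal (g j)
        = Matrix.fromBlocks (Matrix.diagonal fun a => g j (Sum.inl a)) 0 0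
            (Matrix.diagonal fun a => g j (Sum.inr a)) := by
      rw [show g j = Sum.elim (fun a => g j (Sum.inl a)) (fun a => g j (Sum.inr a)) from by
        funext x; cases x <;> rfl, ← Matrix.fromBlocks_diagonal]
      rfl
    have h1 : (Matrix.diagonal (g j) * Qhat j + Qhat j * Matrix.diagonal (g j))
        + (Matrix.diagonal (g j) * Qhat j + Qhat j * Matrix.diagonal (g j))ᵀ
        = Matrix.diagonal (g j) * (Qhat j + (Qhat j)ᵀ)
          + (Qhat j + (Qhat j)ᵀ) * Matrix.diagonal (g j) := by
      simp only [transpose_add, transpose_mul, diagonal_transpose]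
      noncomm_ring
    rw [h1, hSBP j, hd, Matrix.fromBlocks_multiply, Matrix.fromBlocks_multiply,
      Matrix.fromBlocks_add]
    simp [Matrix.diagonal_mul_diagonal, ← Matrix.diagonal_add]
  rw [transpose_smul, ← smul_add, transpose_sum, ← Finset.sum_add_distrib]
  simp_rw [key]
  ext i k
  cases i with
  | inl i =>
    cases k <;> simp [Matrix.smul_apply, Matrix.sum_apply]
  | inr i =>
    cases k with
    | inl k => simp [Matrix.smul_apply, Matrix.sum_apply]
    | inr k =>
      by_cases h : i = k
      · subst h
        simp [Matrix.smul_apply, Matrix.sum_apply, Matrix.diagonal_apply_eq, Finset.mul_sum]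
        exact Finset.sum_congr rfl fun j _ => by ring
      · simp [Matrix.smul_apply, Matrix.sum_apply, Matrix.diagonal_apply_ne _ h]
end

section
/- For the compressible Euler entropy S(u) = -ρs/(γ-1) with s = log(p/ρ^γ), the map from entropy variables back to conservative variables inverts the map from conservative to entropy variables: given ρ > 0, p > 0, velocities u_i, the entropy variables v₁ = (ρe(γ+1-s) - E)/(ρe), v_{1+i} = ρu_i/(ρe), v_{d+2} = -ρ/(ρe) with ρe = p/(γ-1), E = ρe + ρ|u|²/2, satisfy the inverse formulas ρ = -(ρe)v_{d+2}, ρu_i = (ρe)v_{1+i}, E = (ρe)(1 - (Σ_j v_{1+j}²)/(2v_{d+2})), where ρe is recovered as ((γ-1)/(-v_{d+2})^γ)^{1/(γ-1)} e^{-s/(γ-1)} and s = γ - v₁ + (Σ_j v_{1+j}²)/(2v_{d+2}). -/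
/-!
Everything except the recovery of the internal energy is rational algebra: the formula for `s`
rebuilt from the entropy variables reproduces `s` exactly. With `s` back, the recovery formula
equals `ρe` because `p = (γ - 1) ρe` turns the product of the two factors into
`(ρe ^ (γ - 1)) ^ (1 / (γ - 1))`.
-/

open Real

namespace EulerEntropy

theorem exp_neg_log_div_eq_inv_rpow {x : ℝ} (hx : 0 < x) (c : ℝ) :
    exp (-log x / c) = x⁻¹ ^ (1 / c) := by
  rw [rpow_def_of_pos (inv_pos.mpr hx), log_inv]
  ring_nf

theorem entropy_of_entropyVariables {γ ρ ρe s K : ℝ} (hρe : ρe ≠ 0) :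
    γ - (ρe * (γ + 1 - s) - (ρe + ρ * K / 2)) / ρe
        + ρ ^ 2 * K / ρe ^ 2 / (2 * (-ρ / ρe)) = s := by
  field_simp
  ring

theorem internalEnergy_of_entropyVariables {γ ρ ρe : ℝ} (hγ : 1 < γ) (hρ : 0 < ρ)
    (hρe : 0 < ρe) :
    ((γ - 1) / (ρ / ρe) ^ γ) ^ (1 / (γ - 1))
        * exp (-log ((γ - 1) * ρe / ρ ^ γ) / (γ - 1)) = ρe := by
  have hγ1 : 0 < γ - 1 := sub_pos.mpr hγ
  have hργ : 0 < ρ ^ γ := rpow_pos_of_pos hρ γ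
  have hρeγ : 0 < ρe ^ γ := rpow_pos_of_pos hρe γ
  have hbase : (γ - 1) / (ρ / ρe) ^ γ * ((γ - 1) * ρe / ρ ^ γ)⁻¹ = ρe ^ (γ - 1) := by
    rw [div_rpow hρ.le hρe.le, rpow_sub_one hρe.ne']
    field_simp
  rw [exp_neg_log_div_eq_inv_rpow (by positivity), ← mul_rpow (by positivity) (by positivity),
    hbase, one_div, rpow_rpow_inv hρe.le hγ1.ne']

end EulerEntropy

open EulerEntropy in
/-- For the compressible Euler entropy `S(u) = -ρs/(γ-1)` with
`s = log(p/ρ^γ)`, the map from entropy variables back to conservative variables inverts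
the map from conservative to entropy variables. -/
theorem euler_entropy_variable_inversion
    (d : ℕ) (γ : ℝ) (hγ : 1 < γ)
    (ρ : ℝ) (hρ : 0 < ρ) (p : ℝ) (hp : 0 < p) (u : Fin d → ℝ) :
    let ρe : ℝ := p / (γ - 1)
    let E : ℝ := ρe + ρ * (∑ j, u j ^ 2) / 2
    let s : ℝ := Real.log (p / ρ ^ γ)
    let v₁ : ℝ := (ρe * (γ + 1 - s) - E) / ρe
    let vu : Fin d → ℝ := fun i => ρ * u i / ρe
    let vd2 : ℝ := -ρ / ρe
    let s' : ℝ := γ - v₁ + (∑ j, vu j ^ 2) / (2 * vd2)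
    let ρe' : ℝ := ((γ - 1) / (-vd2) ^ γ) ^ (1 / (γ - 1)) * Real.exp (-s' / (γ - 1))
    ρ = -ρe' * vd2 ∧
    (∀ i, ρ * u i = ρe' * vu i) ∧
    E = ρe' * (1 - (∑ j, vu j ^ 2) / (2 * vd2)) := by
  intro ρe E s v₁ vu vd2 s' ρe'
  have hγ1 : 0 < γ - 1 := sub_pos.mpr hγ
  have hρe : 0 < ρe := div_pos hp hγ1
  have hsum : ∑ j, vu j ^ 2 = ρ ^ 2 * (∑ j, u j ^ 2) / ρe ^ 2 := by
    simp only [vu, div_pow, mul_pow, ← Finset.sum_div, ← Finset.mul_sum]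
  have hs : s = log ((γ - 1) * ρe / ρ ^ γ) := by
    simp only [s, ρe, mul_div_cancel₀ p hγ1.ne']
  have hs' : s' = s := by
    simp only [s', v₁, E, vd2, hsum]
    exact entropy_of_entropyVariables hρe.ne'
  have hvd2 : -vd2 = ρ / ρe := by
    simp only [vd2, neg_div, neg_neg]
  have hρe' : ρe' = ρe := by
    simp only [ρe', hs', hs, hvd2]
    exact internalEnergy_of_entropyVariables hγ hρ hρe
  refine ⟨?_, fun i => ?_, ?_⟩
  · simp only [hρe', vd2]
    field_simp
  · simp only [hρe', vu]
    field_simp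
  · simp only [hρe', hsum, vd2, E]
    field_simp
    ring
end
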